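/- Let S be a successor and let T₂ = λn λf (((n)F)f)0̄ where F = λx λy (x)(S)y. Then for every n ≥ 0 and every λ-term θₙ ≃β n̄, (T₂)θₙ f ≻ (f)(S)^n 0̄ (f a fresh variable). In particular T₂ is a storage operator. -/

import Mathlib

namespace SO

/-- Untyped λ-terms in de Bruijn notation (modulo α-equivalence). -/
inductive Term : Type
  | var : ℕ → Term
  | lam : Term → Term
  | app : Term → Term → Term
deriving DecidableEq

namespace Term

/-- Shift the free variables `≥ c` up by one. -/
def lift (c : ℕ) : Term → Term
  | var i => if i < c then var i else var (i + 1)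
  | lam t => lam (lift (c + 1) t)
  | app t u => app (lift c t) (lift c u)

/-- Substitute `s` for the free variable `j`. -/
def subst (j : ℕ) (s : Term) : Term → Term
  | var i => if i = j then s else if j < i then var (i - 1) else var i
  | lam t => lam (subst (j + 1) (lift 0 s) t)
  | app t u => app (subst j s t) (subst j s u)

/-- One step of β-reduction (anywhere in the term). -/
inductive Beta : Term → Term → Prop
  | beta : Beta (app (lam t) u) (subst 0 u t)
  | appL : Beta t t' → Beta (app t u) (app t' u)
  | appR : Beta u u' → Beta (app t u) (app t u')
  | lam : Beta t t' → Beta (lam t) (lam t')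

/-- β-equivalence `u ≃β v`. -/
def BetaEq : Term → Term → Prop := Relation.EqvGen Beta

/-- One step of head reduction: a term `λx₁…λxₙ (λx u)v w̄` reduces its head redex. -/
inductive HeadStep : Term → Term → Prop
  | beta : HeadStep (app (lam t) u) (subst 0 u t)
  | app : HeadStep (app t u) w → HeadStep (app (app t u) v) (app w v)
  | lam : HeadStep t t' → HeadStep (lam t) (lam t')

/-- `u ≻ v` : `v` is obtained from `u` by finitely many head-reduction steps. -/
def HeadRed : Term → Term → Prop := Relation.ReflTransGen HeadStep

/-- Head normal form: no head-reduction step applies. -/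
def IsHNF (t : Term) : Prop := ∀ u, ¬ HeadStep t u

/-- `t` is solvable iff the head reduction of `t` terminates. -/
def Solvable (t : Term) : Prop := ∃ u, HeadRed t u ∧ IsHNF u

/-- `FreeIn k t` : the variable (de Bruijn index) `k` occurs free in `t`. -/
def FreeIn (k : ℕ) : Term → Prop
  | var i => i = k
  | lam t => FreeIn (k + 1) t
  | app t u => FreeIn k t ∨ FreeIn k u

/-- A term is closed iff it has no free variables. -/
def Closed (t : Term) : Prop := ∀ k, ¬ FreeIn k t

/-- `(u)^n v` : `u` applied `n` times to `v`. -/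
def iterApp (u : Term) : ℕ → Term → Term
  | 0, v => v
  | n + 1, v => app u (iterApp u n v)

/-- The Church integer `n̄ = λf λx (f)^n x`. -/
def church (n : ℕ) : Term := lam (lam (iterApp (var 1) n (var 0)))

/-- A closed λ-term `S` is a successor iff `(S)k̄ ≃β (k+1)‾` for every `k`. -/
def IsSuccessor (S : Term) : Prop :=
  Closed S ∧ ∀ k : ℕ, BetaEq (app S (church k)) (church (k + 1))

/-- A closed λ-term `T` is a storage operator iff for every `n ≥ 0` there is a closed
`τₙ ≃β n̄` such that for every `θₙ ≃β n̄` and fresh variable `f`,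
`(T)θₙ f ≻ (f)τₙ`. -/
def IsStorageOp (T : Term) : Prop :=
  Closed T ∧ ∀ n : ℕ, ∃ τ : Term, Closed τ ∧ BetaEq τ (church n) ∧
    ∀ (θ : Term) (f : ℕ), BetaEq θ (church n) → ¬ FreeIn f θ →
      HeadRed (app (app T θ) (var f)) (app (var f) τ)

end Term

end SO

namespace SO
namespace Term

/-- `F = λx λy (x)(S)y`. -/
def Fop (S : Term) : Term := lam (lam (app (var 1) (app S (var 0))))

/-- `T₂ = λn λf (((n)F)f)0̄`. -/
def T2 (S : Term) : Term :=
  lam (lam (app (app (app (var 1) (Fop S)) (var 0)) (church 0)))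

end Term
end SO

namespace SO
namespace Term

/-! ### de Bruijn infrastructure -/

theorem lift_lift (t : Term) : ∀ i j : ℕ, i ≤ j →
    lift i (lift j t) = lift (j + 1) (lift i t) := by
  induction t with
  | var k =>
    intro i j h
    simp only [lift]
    split_ifs <;> simp only [lift] <;> split_ifs <;>
      first | rfl | omega | (congr 1; omega)
  | lam t ih =>
    intro i j h
    simp only [lift]
    rw [ih (i+1) (j+1) (by omega)]
  | app t u iht ihu =>
    intro i j h
    simp only [lift]
    rw [iht _ _ h, ihu _ _ h]

theorem subst_lift (t : Term) : ∀ (j : ℕ) (s : Term), subst j s (lift j t) = t := by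
  induction t with
  | var k =>
    intro j s
    simp only [lift]
    split_ifs <;> simp only [subst] <;> split_ifs <;>
      first | rfl | omega | (congr 1; omega)
  | lam t ih =>
    intro j s
    simp only [lift, subst]
    rw [ih]
  | app t u iht ihu =>
    intro j s
    simp only [lift, subst]
    rw [iht, ihu]

theorem lift_subst_low (t : Term) : ∀ (c j : ℕ) (s : Term), c ≤ j →
    lift c (subst j s t) = subst (j + 1) (lift c s) (lift c t) := by
  induction t with
  | var k =>
    intro c j s h
    simp only [subst]
    split_ifs <;> simp only [lift] <;> split_ifs <;>
      simp only [subst] <;> split_ifs <;>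
      first | rfl | omega | (congr 1; omega)
  | lam t ih =>
    intro c j s h
    simp only [subst, lift]
    rw [ih _ _ _ (by omega), lift_lift s 0 c (by omega)]
  | app t u iht ihu =>
    intro c j s h
    simp only [subst, lift]
    rw [iht _ _ _ h, ihu _ _ _ h]

theorem lift_subst_high (t : Term) : ∀ (c j : ℕ) (s : Term), j ≤ c →
    lift c (subst j s t) = subst j (lift c s) (lift (c + 1) t) := by
  induction t with
  | var k =>
    intro c j s h
    simp only [subst]
    split_ifs <;> simp only [lift] <;> split_ifs <;>
      simp only [subst] <;> split_ifs <;>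
      first | rfl | omega | (congr 1; omega)
  | lam t ih =>
    intro c j s h
    simp only [subst, lift]
    rw [ih _ _ _ (by omega), lift_lift s 0 c (by omega)]
  | app t u iht ihu =>
    intro c j s h
    simp only [subst, lift]
    rw [iht _ _ _ h, ihu _ _ _ h]

theorem subst_subst (t : Term) : ∀ (i j : ℕ) (b s : Term), i ≤ j →
    subst j s (subst i b t) = subst i (subst j s b) (subst (j + 1) (lift i s) t) := by
  induction t with
  | var k =>
    intro i j b s h
    simp only [subst]
    split_ifs <;>
      (try simp only [subst]) <;> (try split_ifs) <;>
      first
        | rfl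
        | omega
        | (congr 1; omega)
        | (exfalso; omega)
        | (exact (subst_lift _ _ _).symm)
        | (exact subst_lift _ _ _)
  | lam t ih =>
    intro i j b s h
    simp only [subst]
    rw [ih _ _ _ _ (by omega), lift_subst_low b 0 j s (by omega),
      lift_lift s 0 i (by omega)]
  | app t u iht ihu =>
    intro i j b s h
    simp only [subst]
    rw [iht _ _ _ _ h, ihu _ _ _ _ h]

theorem subst_of_ge {t : Term} : ∀ {j : ℕ} {s : Term}, (∀ k, j ≤ k → ¬ FreeIn k t) →
    subst j s t = t := by
  induction t with
  | var k =>
    intro j s h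
    have h1 : ¬ (k = j) := fun e => h k (by omega) (by simp [FreeIn])
    have h2 : ¬ (j < k) := fun e => h k (by omega) (by simp [FreeIn])
    simp [subst, h1, h2]
  | lam t ih =>
    intro j s h
    simp only [subst]
    rw [ih]
    intro k hk
    obtain ⟨k', rfl⟩ : ∃ k', k = k' + 1 := ⟨k - 1, by omega⟩
    exact h k' (by omega)
  | app t u iht ihu =>
    intro j s h
    simp only [subst]
    rw [iht, ihu]
    · exact fun k hk hf => h k hk (Or.inr hf)
    · exact fun k hk hf => h k hk (Or.inl hf)

theorem subst_closed {t : Term} (h : Closed t) (j : ℕ) (s : Term) : subst j s t = t :=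
  subst_of_ge (fun k _ => h k)

theorem freeIn_lam {k : ℕ} {t : Term} : FreeIn k (lam t) = FreeIn (k+1) t := rfl

/-- A bound above all free variables. -/
def freshB : Term → ℕ
  | var i => i + 1
  | lam t => freshB t
  | app t u => max (freshB t) (freshB u)

theorem freshB_spec (t : Term) : ∀ k, freshB t ≤ k → ¬ FreeIn k t := by
  induction t with
  | var i => intro k hk h; simp only [FreeIn] at h; simp only [freshB] at hk; omega
  | lam t ih =>
    intro k hk h
    exact ih (k+1) (by simpa [freshB] using Nat.le_succ_of_le hk) h
  | app t u iht ihu =>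
    intro k hk h
    simp only [freshB, max_le_iff] at hk
    rcases h with h | h
    · exact iht k hk.1 h
    · exact ihu k hk.2 h

theorem closed_iterApp {u v : Term} (hu : Closed u) (hv : Closed v) (n : ℕ) :
    Closed (iterApp u n v) := by
  induction n with
  | zero => exact hv
  | succ n ih =>
    intro k h
    rcases h with h | h
    · exact hu k h
    · exact ih k h

theorem closed_church (n : ℕ) : Closed (church n) := by
  have hbody : ∀ k, FreeIn k (iterApp (var 1) n (var 0)) → k = 1 ∨ k = 0 := by
    induction n with
    | zero => intro k h; simp only [iterApp, FreeIn] at h; omega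
    | succ n ih =>
      intro k h
      rcases h with h | h
      · simp only [FreeIn] at h; omega
      · exact ih k h
  intro k h
  simp only [church, FreeIn] at h
  have := hbody _ h
  omega

theorem closed_Fop {S : Term} (hS : Closed S) : Closed (Fop S) := by
  intro k h
  simp only [Fop, FreeIn] at h
  rcases h with h | h | h
  · omega
  · exact hS _ h
  · omega

theorem closed_T2 {S : Term} (hS : Closed S) : Closed (T2 S) := by
  intro k h
  simp only [T2, FreeIn] at h
  rcases h with ((h | h) | h) | h
  · omega
  · exact closed_Fop hS _ h
  · omega
  · exact closed_church 0 _ h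

theorem subst_iterApp (j : ℕ) (s u v : Term) (n : ℕ) :
    subst j s (iterApp u n v) = iterApp (subst j s u) n (subst j s v) := by
  induction n with
  | zero => rfl
  | succ n ih => simp only [iterApp, subst, ih]

theorem iterApp_app (u v : Term) (n : ℕ) :
    iterApp u n (app u v) = app u (iterApp u n v) := by
  induction n with
  | zero => rfl
  | succ n ih => simp only [iterApp, ih]

end Term
end SO

namespace SO
namespace Term

/-! ### Parallel reduction and confluence -/

inductive Par : Term → Term → Prop
  | var (i : ℕ) : Par (var i) (var i)
  | lam {t t'} : Par t t' → Par (lam t) (lam t')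
  | app {t t' u u'} : Par t t' → Par u u' → Par (app t u) (app t' u')
  | beta {t t' u u'} : Par t t' → Par u u' → Par (app (lam t) u) (subst 0 u' t')

theorem par_refl (t : Term) : Par t t := by
  induction t with
  | var i => exact Par.var i
  | lam t ih => exact Par.lam ih
  | app t u iht ihu => exact Par.app iht ihu

theorem beta_par {t u : Term} (h : Beta t u) : Par t u := by
  induction h with
  | beta => exact Par.beta (par_refl _) (par_refl _)
  | appL _ ih => exact Par.app ih (par_refl _)
  | appR _ ih => exact Par.app (par_refl _) ih
  | lam _ ih => exact Par.lam ih

theorem par_lift {t t' : Term} (h : Par t t') : ∀ c, Par (lift c t) (lift c t') := by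
  induction h with
  | var i => intro c; by_cases h1 : i < c <;> simp [lift, h1] <;> exact par_refl _
  | lam _ ih => intro c; exact Par.lam (ih (c+1))
  | app _ _ iht ihu => intro c; exact Par.app (iht c) (ihu c)
  | beta _ _ iht ihu =>
    intro c
    simp only [lift]
    rw [lift_subst_high _ c 0 _ (by omega)]
    exact Par.beta (iht (c+1)) (ihu c)

theorem par_subst {t t' : Term} (h : Par t t') :
    ∀ (j : ℕ) {s s' : Term}, Par s s' → Par (subst j s t) (subst j s' t') := by
  induction h with
  | var i =>
    intro j s s' hs
    by_cases h1 : i = j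
    · simp [subst, h1]; exact hs
    · by_cases h2 : j < i <;> simp [subst, h1, h2] <;> exact par_refl _
  | lam _ ih =>
    intro j s s' hs
    exact Par.lam (ih (j+1) (par_lift hs 0))
  | app _ _ iht ihu =>
    intro j s s' hs
    exact Par.app (iht j hs) (ihu j hs)
  | beta _ _ iht ihu =>
    intro j s s' hs
    simp only [subst]
    rw [subst_subst _ 0 j _ _ (by omega)]
    exact Par.beta (iht (j+1) (par_lift hs 0)) (ihu j hs)

/-- Complete development (Takahashi). -/
def dev : Term → Term
  | var i => var i
  | lam t => lam (dev t)
  | app (lam t) u => subst 0 (dev u) (dev t)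
  | app (var i) u => app (var i) (dev u)
  | app (app a b) u => app (dev (app a b)) (dev u)

theorem par_dev {t u : Term} (h : Par t u) : Par u (dev t) := by
  induction h with
  | var i => exact Par.var i
  | lam _ ih => exact Par.lam ih
  | beta _ _ iht ihu => exact par_subst iht 0 ihu
  | @app p p' q q' hp hq ihp ihq =>
    cases p with
    | var i =>
      cases hp
      exact Par.app (Par.var i) ihq
    | lam a =>
      cases hp with
      | lam ha =>
        cases ihp with
        | lam hb => exact Par.beta hb ihq
    | app a b => exact Par.app ihp ihq

theorem par_diamond {t a b : Term} (h1 : Par t a) (h2 : Par t b) :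
    ∃ c, Par a c ∧ Par b c :=
  ⟨dev t, par_dev h1, par_dev h2⟩

/-- Reflexive–transitive closure of parallel reduction. -/
def Pars : Term → Term → Prop := Relation.ReflTransGen Par

theorem par_pars_strip {t a c : Term} (h : Par t a) (hc : Pars t c) :
    ∃ d, Pars a d ∧ Par c d := by
  induction hc with
  | refl => exact ⟨a, Relation.ReflTransGen.refl, h⟩
  | tail _ hstep ih =>
    obtain ⟨d, hd1, hd2⟩ := ih
    obtain ⟨e, he1, he2⟩ := par_diamond hd2 hstep
    exact ⟨e, hd1.tail he1, he2⟩

theorem pars_confluent {t a b : Term} (h1 : Pars t a) (h2 : Pars t b) :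
    ∃ c, Pars a c ∧ Pars b c := by
  induction h1 with
  | refl => exact ⟨b, h2, Relation.ReflTransGen.refl⟩
  | tail _ hstep ih =>
    obtain ⟨c, hc1, hc2⟩ := ih
    obtain ⟨d, hd1, hd2⟩ := par_pars_strip hstep hc1
    exact ⟨d, hd1, hc2.tail hd2⟩

theorem betaEq_join {a b : Term} (h : BetaEq a b) : ∃ c, Pars a c ∧ Pars b c := by
  induction h with
  | rel x y hxy => exact ⟨y, Relation.ReflTransGen.single (beta_par hxy), Relation.ReflTransGen.refl⟩
  | refl x => exact ⟨x, Relation.ReflTransGen.refl, Relation.ReflTransGen.refl⟩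
  | symm x y _ ih => obtain ⟨c, h1, h2⟩ := ih; exact ⟨c, h2, h1⟩
  | trans x y z _ _ ih1 ih2 =>
    obtain ⟨c, hc1, hc2⟩ := ih1
    obtain ⟨d, hd1, hd2⟩ := ih2
    obtain ⟨e, he1, he2⟩ := pars_confluent hc2 hd1
    exact ⟨e, hc1.trans he1, hd2.trans he2⟩

theorem par_iter_church {n : ℕ} : ∀ {u : Term}, Par (iterApp (var 1) n (var 0)) u →
    u = iterApp (var 1) n (var 0) := by
  induction n with
  | zero => intro u h; cases h; rfl
  | succ n ih =>
    intro u h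
    cases h with
    | app h1 h2 =>
      cases h1
      rw [ih h2]
      rfl

theorem par_church {n : ℕ} {u : Term} (h : Par (church n) u) : u = church n := by
  cases h with
  | lam h1 =>
    cases h1 with
    | lam h2 => simp [church, par_iter_church h2]

theorem pars_church {n : ℕ} {u : Term} (h : Pars (church n) u) : u = church n := by
  induction h with
  | refl => rfl
  | tail _ hstep ih => subst ih; exact par_church hstep

theorem betaEq_church_pars {θ : Term} {n : ℕ} (h : BetaEq θ (church n)) :
    Pars θ (church n) := by
  obtain ⟨c, h1, h2⟩ := betaEq_join h
  rwa [pars_church h2] at h1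

theorem pars_subst_term {t t' : Term} (h : Pars t t') (j : ℕ) (s : Term) :
    Pars (subst j s t) (subst j s t') :=
  Relation.ReflTransGen.lift (subst j s) (fun _ _ hp => par_subst hp j (par_refl s)) _ _ h

end Term
end SO

namespace SO
namespace Term

/-! ### Weak head reduction and the decomposition of parallel reduction -/

/-- Weak head (leftmost-outermost spine) steps; a sub-relation of `HeadStep`. -/
inductive WStep : Term → Term → Prop
  | beta {t u} : WStep (app (lam t) u) (subst 0 u t)
  | app {t w v} : WStep t w → WStep (app t v) (app w v)

theorem wstep_src_app {t w : Term} (h : WStep t w) : ∃ a b, t = app a b := by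
  cases h <;> exact ⟨_, _, rfl⟩

theorem wstep_head {t w : Term} (h : WStep t w) : HeadStep t w := by
  induction h with
  | beta => exact HeadStep.beta
  | app h ih =>
    obtain ⟨a, b, rfl⟩ := wstep_src_app h
    exact HeadStep.app ih

def Wstar : Term → Term → Prop := Relation.ReflTransGen WStep

theorem wstar_headRed {t u : Term} (h : Wstar t u) : HeadRed t u :=
  Relation.ReflTransGen.mono (fun _ _ => wstep_head) _ _ h

theorem wstep_subst {t t' : Term} (h : WStep t t') (j : ℕ) (s : Term) :
    WStep (subst j s t) (subst j s t') := by
  induction h with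
  | @beta a b =>
    simp only [subst]
    rw [subst_subst _ 0 j _ _ (by omega)]
    exact WStep.beta
  | app _ ih => exact WStep.app ih

theorem wstar_subst {t t' : Term} (h : Wstar t t') (j : ℕ) (s : Term) :
    Wstar (subst j s t) (subst j s t') :=
  Relation.ReflTransGen.lift (subst j s) (fun _ _ hp => wstep_subst hp j s) _ _ h

theorem wstar_appL {t t' v : Term} (h : Wstar t t') : Wstar (app t v) (app t' v) :=
  Relation.ReflTransGen.lift (fun x => app x v) (fun _ _ hp => WStep.app hp) _ _ h

/-- Internal parallel reduction: no weak head redex is contracted. -/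
inductive Ipar : Term → Term → Prop
  | var (i : ℕ) : Ipar (var i) (var i)
  | lam {t t'} : Par t t' → Ipar (lam t) (lam t')
  | app {t t' u u'} : Ipar t t' → Par u u' → Ipar (app t u) (app t' u')

theorem ipar_par {t u : Term} (h : Ipar t u) : Par t u := by
  induction h with
  | var i => exact Par.var i
  | lam h => exact Par.lam h
  | app _ h ih => exact Par.app ih h

/-- Substitution into an internal reduction, given a decomposition of the argument. -/
theorem ipar_subst_decomp {M M' : Term} (h : Ipar M M') :
    ∀ (j : ℕ) {N N' V : Term}, Wstar N V → Ipar V N' → Par N N' →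
      ∃ W, Wstar (subst j N M) W ∧ Ipar W (subst j N' M') := by
  induction h with
  | var i =>
    intro j N N' V hNV hV hNN'
    by_cases h1 : i = j
    · subst h1
      simp only [subst, if_pos rfl]
      exact ⟨V, hNV, hV⟩
    · by_cases h2 : j < i <;> simp only [subst, if_neg h1, if_pos, if_neg, h2] <;>
        first
          | exact ⟨_, Relation.ReflTransGen.refl, Ipar.var _⟩
          | (simp only [if_pos h2]; exact ⟨_, Relation.ReflTransGen.refl, Ipar.var _⟩)
          | (simp only [if_neg h2]; exact ⟨_, Relation.ReflTransGen.refl, Ipar.var _⟩)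
  | @lam P P' hP =>
    intro j N N' V hNV hV hNN'
    refine ⟨_, Relation.ReflTransGen.refl, ?_⟩
    simp only [subst]
    exact Ipar.lam (par_subst hP (j+1) (par_lift hNN' 0))
  | @app P P' Q Q' hP hQ ihP =>
    intro j N N' V hNV hV hNN'
    obtain ⟨W₁, hW₁, hiW₁⟩ := ihP j hNV hV hNN'
    refine ⟨app W₁ (subst j N Q), ?_, ?_⟩
    · exact wstar_appL hW₁
    · exact Ipar.app hiW₁ (par_subst hQ j hNN')

/-- Takahashi decomposition: a parallel step is a weak head reduction followed by an
internal parallel step. -/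
theorem par_decomp {t u : Term} (h : Par t u) : ∃ v, Wstar t v ∧ Ipar v u := by
  induction h with
  | var i => exact ⟨_, Relation.ReflTransGen.refl, Ipar.var i⟩
  | @lam a a' ha _ => exact ⟨lam a, Relation.ReflTransGen.refl, Ipar.lam ha⟩
  | @app p p' q q' hp hq ihp _ =>
    obtain ⟨v₁, hv₁, hiv₁⟩ := ihp
    exact ⟨app v₁ q, wstar_appL hv₁, Ipar.app hiv₁ hq⟩
  | @beta a a' b b' ha hb iha ihb =>
    obtain ⟨a₀, ha₀, hia₀⟩ := iha
    obtain ⟨V, hV, hiV⟩ := ihb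
    obtain ⟨W, hW, hiW⟩ := ipar_subst_decomp hia₀ 0 hV hiV hb
    refine ⟨W, ?_, hiW⟩
    exact (Relation.ReflTransGen.head WStep.beta (wstar_subst ha₀ 0 b)).trans hW

theorem ipar_wstep {t₁ t₂ : Term} (h : WStep t₁ t₂) :
    ∀ {v : Term}, Ipar v t₁ → ∃ w, Wstar v w ∧ Par w t₂ := by
  induction h with
  | @beta a₁ b₁ =>
    intro v hv
    cases hv with
    | app h1 h2 =>
      cases h1 with
      | lam ha =>
        exact ⟨_, Relation.ReflTransGen.single WStep.beta, par_subst ha 0 h2⟩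
  | @app p p' q hp ih =>
    intro v hv
    cases hv with
    | app h1 h2 =>
      obtain ⟨w₁, hw₁, hpw₁⟩ := ih h1
      exact ⟨_, wstar_appL hw₁, Par.app hpw₁ h2⟩

theorem par_wstep_push {t t₁ t₂ : Term} (h : Par t t₁) (hs : WStep t₁ t₂) :
    ∃ w, Wstar t w ∧ Par w t₂ := by
  obtain ⟨v, hv, hiv⟩ := par_decomp h
  obtain ⟨w, hw, hpw⟩ := ipar_wstep hs hiv
  exact ⟨w, hv.trans hw, hpw⟩

theorem par_wstar_push {t t₁ t₂ : Term} (h : Par t t₁) (hs : Wstar t₁ t₂) :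
    ∃ w, Wstar t w ∧ Par w t₂ := by
  induction hs with
  | refl => exact ⟨t, Relation.ReflTransGen.refl, h⟩
  | tail _ hstep ih =>
    obtain ⟨w, hw, hpw⟩ := ih
    obtain ⟨w', hw', hpw'⟩ := par_wstep_push hpw hstep
    exact ⟨w', hw.trans hw', hpw'⟩

/-! ### Shape lemmas (standardization corollaries) -/

theorem pars_lam_decomp {t s : Term} (h : Pars t (lam s)) :
    ∃ s', Wstar t (lam s') ∧ Pars s' s := by
  induction h using Relation.ReflTransGen.head_induction_on with
  | refl => exact ⟨s, Relation.ReflTransGen.refl, Relation.ReflTransGen.refl⟩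
  | head hstep _ ih =>
    obtain ⟨s₁, hw₁, hp₁⟩ := ih
    obtain ⟨w, hw, hpw⟩ := par_wstar_push hstep hw₁
    obtain ⟨v, hv, hiv⟩ := par_decomp hpw
    cases hiv with
    | lam hinner => exact ⟨_, hw.trans hv, Relation.ReflTransGen.head hinner hp₁⟩

theorem pars_var_decomp {t : Term} {y : ℕ} (h : Pars t (var y)) : Wstar t (var y) := by
  induction h using Relation.ReflTransGen.head_induction_on with
  | refl => exact Relation.ReflTransGen.refl
  | head hstep _ ih =>
    obtain ⟨w, hw, hpw⟩ := par_wstar_push hstep ih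
    obtain ⟨v, hv, hiv⟩ := par_decomp hpw
    cases hiv with
    | var => exact hw.trans hv

theorem pars_appvar_decomp {t s : Term} {y : ℕ} (h : Pars t (app (var y) s)) :
    ∃ s', Wstar t (app (var y) s') ∧ Pars s' s := by
  induction h using Relation.ReflTransGen.head_induction_on with
  | refl => exact ⟨s, Relation.ReflTransGen.refl, Relation.ReflTransGen.refl⟩
  | head hstep _ ih =>
    obtain ⟨s₁, hw₁, hp₁⟩ := ih
    obtain ⟨w, hw, hpw⟩ := par_wstar_push hstep hw₁
    obtain ⟨v, hv, hiv⟩ := par_decomp hpw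
    cases hiv with
    | app h1 h2 =>
      cases h1 with
      | var => exact ⟨_, hw.trans hv, Relation.ReflTransGen.head h2 hp₁⟩

end Term
end SO

namespace SO
namespace Term

/-! ### The key computation for `T₂` -/

theorem fop_subst {S : Term} (hS : Closed S) (z : Term) :
    subst 0 z (lam (app (var 1) (app S (var 0)))) = lam (app (lift 0 z) (app S (var 0))) := by
  simp [subst, subst_closed hS]

theorem fop_wstar {S : Term} (hS : Closed S) (z X : Term) :
    Wstar (app (app (Fop S) z) X) (app z (app S X)) := by
  have h1 : WStep (app (Fop S) z) (lam (app (lift 0 z) (app S (var 0)))) := by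
    have h := WStep.beta (t := lam (app (var 1) (app S (var 0)))) (u := z)
    rwa [fop_subst hS] at h
  have h2 : WStep (app (lam (app (lift 0 z) (app S (var 0)))) X) (app z (app S X)) := by
    have h := WStep.beta (t := app (lift 0 z) (app S (var 0))) (u := X)
    have e : subst 0 X (app (lift 0 z) (app S (var 0))) = app z (app S X) := by
      simp [subst, subst_lift, subst_closed hS]
    rwa [e] at h
  exact Relation.ReflTransGen.head (WStep.app h1) (Relation.ReflTransGen.single h2)

theorem fc {S : Term} (hS : Closed S) (m f : ℕ) :
    ∀ (n : ℕ) (t X : Term), Pars t (iterApp (var (m+1)) n (var m)) →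
      Wstar (app (subst m (var f) (subst (m+1) (Fop S) t)) X)
        (app (var f) (iterApp S n X)) := by
  intro n
  induction n with
  | zero =>
    intro t X h
    have hw : Wstar t (var m) := pars_var_decomp h
    have h2 : Wstar (subst m (var f) (subst (m+1) (Fop S) t)) (var f) := by
      have h3 := wstar_subst (wstar_subst hw (m+1) (Fop S)) m (var f)
      simpa [subst] using h3
    exact wstar_appL h2
  | succ n ih =>
    intro t X h
    simp only [iterApp] at h
    obtain ⟨c, hw, hc⟩ := pars_appvar_decomp h
    have hsub : Wstar (subst m (var f) (subst (m+1) (Fop S) t))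
        (app (Fop S) (subst m (var f) (subst (m+1) (Fop S) c))) := by
      have h3 := wstar_subst (wstar_subst hw (m+1) (Fop S)) m (var f)
      simpa [subst, subst_closed (closed_Fop hS)] using h3
    have w1 : Wstar (app (subst m (var f) (subst (m+1) (Fop S) t)) X)
        (app (app (Fop S) (subst m (var f) (subst (m+1) (Fop S) c))) X) := wstar_appL hsub
    have w2 := fop_wstar hS (subst m (var f) (subst (m+1) (Fop S) c)) X
    have w3 := ih c (app S X) hc
    rw [iterApp_app] at w3
    exact (w1.trans w2).trans w3

theorem main_head {S : Term} (hS : Closed S) (n : ℕ) (θ : Term) (f : ℕ)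
    (h : Pars θ (church n)) :
    HeadRed (app (app (T2 S) θ) (var f)) (app (var f) (iterApp S n (church 0))) := by
  set m := freshB θ with hm
  have h1 : HeadStep (app (T2 S) θ)
      (lam (app (app (app (lift 0 θ) (Fop S)) (var 0)) (church 0))) := by
    have hb := HeadStep.beta
      (t := lam (app (app (app (var 1) (Fop S)) (var 0)) (church 0))) (u := θ)
    have e : subst 0 θ (lam (app (app (app (var 1) (Fop S)) (var 0)) (church 0)))
        = lam (app (app (app (lift 0 θ) (Fop S)) (var 0)) (church 0)) := by
      show lam (app (app (app (subst 1 (lift 0 θ) (var 1)) (subst 1 (lift 0 θ) (Fop S)))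
        (subst 1 (lift 0 θ) (var 0))) (subst 1 (lift 0 θ) (church 0))) = _
      rw [subst_closed (closed_Fop hS), subst_closed (closed_church 0)]
      simp [subst]
    rwa [e] at hb
  have h2 : HeadStep (app (lam (app (app (app (lift 0 θ) (Fop S)) (var 0)) (church 0))) (var f))
      (app (app (app θ (Fop S)) (var f)) (church 0)) := by
    have hb := HeadStep.beta
      (t := app (app (app (lift 0 θ) (Fop S)) (var 0)) (church 0)) (u := var f)
    have e : subst 0 (var f) (app (app (app (lift 0 θ) (Fop S)) (var 0)) (church 0))
        = app (app (app θ (Fop S)) (var f)) (church 0) := by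
      show app (app (app (subst 0 (var f) (lift 0 θ)) (subst 0 (var f) (Fop S)))
        (subst 0 (var f) (var 0))) (subst 0 (var f) (church 0)) = _
      rw [subst_lift, subst_closed (closed_Fop hS), subst_closed (closed_church 0)]
      simp [subst]
    rwa [e] at hb
  -- decompose θ's reduction to the Church numeral
  have hchu : Pars θ (lam (lam (iterApp (var 1) n (var 0)))) := h
  obtain ⟨u, hu, hpu⟩ := pars_lam_decomp hchu
  have hpu1 : Pars (subst 0 (var (m+1)) u) (lam (iterApp (var (m+2)) n (var 0))) := by
    have h3 := pars_subst_term hpu 0 (var (m+1))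
    simpa [subst, lift, subst_iterApp] using h3
  obtain ⟨u₂, hu₂, hpu₂⟩ := pars_lam_decomp hpu1
  have hpu3 : Pars (subst 0 (var m) u₂) (iterApp (var (m+1)) n (var m)) := by
    have h3 := pars_subst_term hpu₂ 0 (var m)
    simpa [subst_iterApp, subst] using h3
  have hN : Wstar (app (app θ (var (m+1))) (var m)) (subst 0 (var m) u₂) := by
    have s1 : Wstar (app θ (var (m+1))) (lam u₂) := by
      have t1 : Wstar (app θ (var (m+1))) (app (lam u) (var (m+1))) := wstar_appL hu
      have t2 : WStep (app (lam u) (var (m+1))) (subst 0 (var (m+1)) u) := WStep.beta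
      exact (t1.tail t2).trans hu₂
    have s2 : Wstar (app (app θ (var (m+1))) (var m)) (app (lam u₂) (var m)) := wstar_appL s1
    exact s2.tail WStep.beta
  have hfresh : ∀ k, m ≤ k → ¬ FreeIn k θ := fun k hk => freshB_spec θ k (by omega)
  have hθ1 : subst (m+1) (Fop S) θ = θ := subst_of_ge (fun k hk => hfresh k (by omega))
  have hθ2 : subst m (var f) θ = θ := subst_of_ge (fun k hk => hfresh k hk)
  have hSUBN : Wstar (app (app θ (Fop S)) (var f))
      (subst m (var f) (subst (m+1) (Fop S) (subst 0 (var m) u₂))) := by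
    have h3 := wstar_subst (wstar_subst hN (m+1) (Fop S)) m (var f)
    simpa [subst, hθ1, hθ2, subst_closed (closed_Fop hS)] using h3
  have hmain : Wstar (app (app (app θ (Fop S)) (var f)) (church 0))
      (app (var f) (iterApp S n (church 0))) := by
    have w1 := wstar_appL (v := church 0) hSUBN
    have w2 := fc hS m f n (subst 0 (var m) u₂) (church 0) hpu3
    exact w1.trans w2
  exact Relation.ReflTransGen.head (HeadStep.app h1) (Relation.ReflTransGen.head h2 (wstar_headRed hmain))

theorem betaEq_appR {t u v : Term} (h : BetaEq u v) : BetaEq (app t u) (app t v) := by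
  induction h with
  | rel x y hxy => exact Relation.EqvGen.rel _ _ (Beta.appR hxy)
  | refl x => exact Relation.EqvGen.refl _
  | symm x y _ ih => exact Relation.EqvGen.symm _ _ ih
  | trans x y z _ _ ih1 ih2 => exact Relation.EqvGen.trans _ _ _ ih1 ih2

end Term
end SO


open SO Term

/-- Let `S` be a successor and `T₂ = λn λf (((n)F)f)0̄` with `F = λx λy (x)(S)y`.
Then for every `n ≥ 0` and every `θₙ ≃β n̄`, `(T₂)θₙ f ≻ (f)(S)^n 0̄`
(`f` a fresh variable); in particular `T₂` is a storage operator. -/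
theorem T2_storage (S : SO.Term) (hS : IsSuccessor S) :
    (∀ (n : ℕ) (θ : SO.Term) (f : ℕ), BetaEq θ (church n) → ¬ FreeIn f θ →
      HeadRed (app (app (T2 S) θ) (var f)) (app (var f) (iterApp S n (church 0)))) ∧
    IsStorageOp (T2 S) := by
  have hmain : ∀ (n : ℕ) (θ : SO.Term) (f : ℕ), BetaEq θ (church n) →
      HeadRed (app (app (T2 S) θ) (var f)) (app (var f) (iterApp S n (church 0))) :=
    fun n θ f hbe => main_head hS.1 n θ f (betaEq_church_pars hbe)
  refine ⟨fun n θ f hbe _ => hmain n θ f hbe, closed_T2 hS.1, fun n => ⟨iterApp S n (church 0),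
    closed_iterApp hS.1 (closed_church 0) n, ?_, fun θ f hbe _ => hmain n θ f hbe⟩⟩
  induction n with
  | zero => exact Relation.EqvGen.refl _
  | succ n ih =>
    exact Relation.EqvGen.trans _ _ _ (betaEq_appR ih) (hS.2 n)
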